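/- arXiv:2506.02278 — 2 statements merged into one kernel-verified Lean document; each statement's English description precedes it below -/
import Mathlib

section
/- The operator L on C([0,1]) defined by (Lζ)(R) = ζ(R) + (2/R³)∫₀^R τ²ζ(τ)dτ, with the value at R=0 interpreted by continuity as (Lζ)(0) = ζ(0) + (2/3)ζ(0), is invertible, with inverse given explicitly by (L⁻¹η)(R) = η(R) − (2/R⁵)∫₀^R τ⁴η(τ)dτ. -/
open Set

/-- The operator `L` on `C([0,1])`: `(Lζ)(R) = ζ(R) + (2/R³)∫₀^R τ²ζ(τ)dτ`,
with value `(5/3)ζ(0)` at `R = 0` (the continuous extension). -/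
noncomputable def Lop (ζ : ℝ → ℝ) (R : ℝ) : ℝ :=
  if R = 0 then (5/3) * ζ 0
  else ζ R + (2 / R ^ 3) * ∫ τ in (0:ℝ)..R, τ ^ 2 * ζ τ

/-- The claimed inverse operator: `(L⁻¹η)(R) = η(R) − (2/R⁵)∫₀^R τ⁴η(τ)dτ`,
with value `(3/5)η(0)` at `R = 0`. -/
noncomputable def Linv (η : ℝ → ℝ) (R : ℝ) : ℝ :=
  if R = 0 then (3/5) * η 0
  else η R - (2 / R ^ 5) * ∫ τ in (0:ℝ)..R, τ ^ 4 * η τ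

set_option maxHeartbeats 1000000 in
/-- `L` is invertible on `C([0,1])`, with inverse given explicitly by `Linv`. -/
theorem stmt_0 (ζ : ℝ → ℝ) (hζ : ContinuousOn ζ (Icc 0 1)) :
    (∀ R ∈ Icc (0:ℝ) 1, Linv (Lop ζ) R = ζ R) ∧
    (∀ R ∈ Icc (0:ℝ) 1, Lop (Linv ζ) R = ζ R) := by
  -- continuous extension of ζ to all of ℝ
  set ψ : ℝ → ℝ := fun x => ζ ((projIcc (0:ℝ) 1 zero_le_one x : Icc (0:ℝ) 1)) with hψdef
  have hψc : Continuous ψ := (hζ.restrict).comp continuous_projIcc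
  have hψeq : ∀ x ∈ Icc (0:ℝ) 1, ψ x = ζ x := by
    intro x hx
    simp [hψdef, projIcc_of_mem zero_le_one hx]
  -- global bound on ψ
  obtain ⟨c, hc, hcmax⟩ := isCompact_Icc.exists_isMaxOn (nonempty_Icc.2 zero_le_one) hζ.abs
  set M : ℝ := |ζ c| with hM
  have hM0 : 0 ≤ M := abs_nonneg _
  have hψbd : ∀ x, |ψ x| ≤ M := fun x => hcmax ((projIcc (0:ℝ) 1 zero_le_one x)).2
  -- primitives
  set F : ℝ → ℝ := fun x => ∫ s in (0:ℝ)..x, s ^ 2 * ψ s with hF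
  set G : ℝ → ℝ := fun x => ∫ s in (0:ℝ)..x, s ^ 4 * ψ s with hG
  have hcF : Continuous fun s : ℝ => s ^ 2 * ψ s := by continuity
  have hcG : Continuous fun s : ℝ => s ^ 4 * ψ s := by continuity
  have hFderiv : ∀ x : ℝ, HasDerivAt F (x ^ 2 * ψ x) x := fun x =>
    intervalIntegral.integral_hasDerivAt_right (hcF.intervalIntegrable _ _)
      (hcF.aestronglyMeasurable.stronglyMeasurableAtFilter) hcF.continuousAt
  have hGderiv : ∀ x : ℝ, HasDerivAt G (x ^ 4 * ψ x) x := fun x =>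
    intervalIntegral.integral_hasDerivAt_right (hcG.intervalIntegrable _ _)
      (hcG.aestronglyMeasurable.stronglyMeasurableAtFilter) hcG.continuousAt
  have hF0 : F 0 = 0 := intervalIntegral.integral_same
  have hG0 : G 0 = 0 := intervalIntegral.integral_same
  -- bound on G : |G x| ≤ M * |x|^5
  have hGbd : ∀ x : ℝ, |G x| ≤ M * |x| ^ 5 := by
    intro x
    have key : ‖∫ s in (0:ℝ)..x, s ^ 4 * ψ s‖ ≤ M * |x| ^ 4 * |x - 0| := by
      apply intervalIntegral.norm_integral_le_of_norm_le_const
      intro s hs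
      have hsx : |s| ≤ |x| := by
        rcases le_or_gt 0 x with h | h
        · rw [uIoc_of_le h] at hs
          rw [abs_of_pos hs.1, abs_of_nonneg h]; exact hs.2
        · rw [uIoc_of_ge h.le] at hs
          rw [abs_of_nonpos hs.2, abs_of_neg h]; linarith [hs.1]
      have : ‖s ^ 4 * ψ s‖ = |s| ^ 4 * |ψ s| := by
        rw [Real.norm_eq_abs, abs_mul, abs_pow]
      rw [this]
      calc |s| ^ 4 * |ψ s| ≤ |x| ^ 4 * M :=
            mul_le_mul (pow_le_pow_left₀ (abs_nonneg _) hsx 4) (hψbd s) (abs_nonneg _)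
              (by positivity)
        _ = M * |x| ^ 4 := by ring
    have : |G x| ≤ M * |x| ^ 4 * |x| := by simpa [Real.norm_eq_abs] using key
    calc |G x| ≤ M * |x| ^ 4 * |x| := this
      _ = M * |x| ^ 5 := by ring
  ------------------------------------------------------------------
  -- IDENTITY 1 : ∫₀^R (τ⁴ψτ + 2τFτ) dτ = R² F R
  ------------------------------------------------------------------
  set B₁ : ℝ → ℝ := fun x => x ^ 2 * F x with hB₁
  have hg₁c : Continuous fun τ : ℝ => τ ^ 4 * ψ τ + 2 * τ * F τ := by
    have hFc : Continuous F := continuous_iff_continuousAt.2 fun x => (hFderiv x).continuousAt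
    continuity
  have hB₁deriv : ∀ x : ℝ, HasDerivAt B₁ (x ^ 4 * ψ x + 2 * x * F x) x := by
    intro x
    have := ((hasDerivAt_pow 2 x).fun_mul (hFderiv x))
    refine this.congr_deriv ?_
    ring
  have hId1 : ∀ R : ℝ, (∫ τ in (0:ℝ)..R, (τ ^ 4 * ψ τ + 2 * τ * F τ)) = R ^ 2 * F R := by
    intro R
    have := intervalIntegral.integral_eq_sub_of_hasDerivAt
      (f := B₁) (f' := fun τ => τ ^ 4 * ψ τ + 2 * τ * F τ) (a := (0:ℝ)) (b := R)
      (fun x _ => hB₁deriv x) (hg₁c.intervalIntegrable _ _)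
    simpa [hB₁, hF0] using this
  ------------------------------------------------------------------
  -- IDENTITY 2 : ∫₀^R (τ²ψτ - (2/τ³) G τ) dτ = G R / R²
  ------------------------------------------------------------------
  set g₂ : ℝ → ℝ := fun τ => τ ^ 2 * ψ τ - (2 / τ ^ 3) * G τ with hg₂
  set B₂ : ℝ → ℝ := fun x => G x / x ^ 2 with hB₂
  have hg₂0 : g₂ 0 = 0 := by simp [hg₂, hG0]
  have hB₂0 : B₂ 0 = 0 := by simp [hB₂, hG0]
  -- continuity of g₂
  have hg₂bd : ∀ τ : ℝ, |g₂ τ| ≤ 3 * M * τ ^ 2 := by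
    intro τ
    rcases eq_or_ne τ 0 with rfl | hτ
    · simp [hg₂0]
    · have h1 : |τ ^ 2 * ψ τ| ≤ M * τ ^ 2 := by
        rw [abs_mul, abs_pow, sq_abs]
        calc τ ^ 2 * |ψ τ| ≤ τ ^ 2 * M := by
              exact mul_le_mul_of_nonneg_left (hψbd τ) (sq_nonneg τ)
          _ = M * τ ^ 2 := by ring
      have h2 : |(2 / τ ^ 3) * G τ| ≤ 2 * M * τ ^ 2 := by
        rw [abs_mul, abs_div]
        have hτ3 : |τ ^ 3| = |τ| ^ 3 := abs_pow τ 3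
        have hτpos : (0:ℝ) < |τ| := abs_pos.2 hτ
        calc |(2:ℝ)| / |τ ^ 3| * |G τ| ≤ 2 / |τ| ^ 3 * (M * |τ| ^ 5) := by
              rw [hτ3, abs_two]
              exact mul_le_mul_of_nonneg_left (hGbd τ) (by positivity)
          _ = 2 * M * |τ| ^ 2 := by
              rw [show |τ| ^ 5 = |τ| ^ 3 * |τ| ^ 2 from by ring]
              field_simp
          _ = 2 * M * τ ^ 2 := by rw [sq_abs]
      calc |g₂ τ| ≤ |τ ^ 2 * ψ τ| + |(2 / τ ^ 3) * G τ| := abs_sub _ _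
        _ ≤ M * τ ^ 2 + 2 * M * τ ^ 2 := add_le_add h1 h2
        _ = 3 * M * τ ^ 2 := by ring
  have hg₂c : Continuous g₂ := by
    rw [continuous_iff_continuousAt]
    intro x
    rcases eq_or_ne x 0 with rfl | hx
    · rw [ContinuousAt, hg₂0]
      apply squeeze_zero_norm hg₂bd
      have : Continuous fun τ : ℝ => 3 * M * τ ^ 2 := by continuity
      simpa using this.tendsto 0
    · have hGc : Continuous G := continuous_iff_continuousAt.2 fun y => (hGderiv y).continuousAt
      have : ContinuousAt (fun τ : ℝ => τ ^ 2 * ψ τ - (2 / τ ^ 3) * G τ) x := by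
        apply ContinuousAt.sub
        · exact ((continuous_pow 2).continuousAt).mul hψc.continuousAt
        · apply ContinuousAt.mul _ hGc.continuousAt
          apply ContinuousAt.div continuousAt_const ((continuous_pow 3).continuousAt)
          exact pow_ne_zero 3 hx
      exact this
  -- B₂ has derivative g₂ everywhere
  have hB₂deriv : ∀ x : ℝ, HasDerivAt B₂ (g₂ x) x := by
    intro x
    rcases eq_or_ne x 0 with rfl | hx
    · -- derivative 0 at 0 via squeeze
      rw [hasDerivAt_iff_tendsto_slope, hg₂0]
      have hslope : ∀ y : ℝ, |slope B₂ 0 y| ≤ M * y ^ 2 := by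
        intro y
        rcases eq_or_ne y 0 with rfl | hy
        · simp [slope]
        · have h1 : slope B₂ 0 y = G y / y ^ 3 := by
            rw [slope_def_field, hB₂0, sub_zero, sub_zero, hB₂]
            rw [div_div, show y ^ 2 * y = y ^ 3 from by ring]
          rw [h1, abs_div, abs_pow]
          have hy3 : (0:ℝ) < |y| ^ 3 := by positivity
          calc |G y| / |y| ^ 3 ≤ M * |y| ^ 5 / |y| ^ 3 :=
                (div_le_div_iff_of_pos_right hy3).2 (hGbd y)
            _ = M * |y| ^ 2 := by
                rw [show |y| ^ 5 = |y| ^ 3 * |y| ^ 2 from by ring]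
                field_simp
            _ = M * y ^ 2 := by rw [sq_abs]
      apply squeeze_zero_norm hslope
      have hc2 : Continuous fun y : ℝ => M * y ^ 2 := by continuity
      have := (hc2.tendsto 0).mono_left (nhdsWithin_le_nhds (s := {(0:ℝ)}ᶜ))
      simpa using this
    · have h1 : HasDerivAt (fun y => G y / y ^ 2)
          ((x ^ 4 * ψ x * x ^ 2 - G x * (2 * x)) / (x ^ 2) ^ 2) x := by
        exact (hGderiv x).div (by simpa using hasDerivAt_pow 2 x) (pow_ne_zero 2 hx)
      convert h1 using 1
      rw [hg₂]
      field_simp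
  have hId2 : ∀ R : ℝ, (∫ τ in (0:ℝ)..R, g₂ τ) = G R / R ^ 2 := by
    intro R
    have := intervalIntegral.integral_eq_sub_of_hasDerivAt
      (f := B₂) (f' := g₂) (a := (0:ℝ)) (b := R)
      (fun x _ => hB₂deriv x) (hg₂c.intervalIntegrable _ _)
    simpa [hB₂, hB₂0] using this
  ------------------------------------------------------------------
  -- assembly
  ------------------------------------------------------------------
  have hsub : ∀ R ∈ Icc (0:ℝ) 1, uIcc (0:ℝ) R ⊆ Icc 0 1 := by
    intro R hR
    rw [uIcc_of_le hR.1]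
    exact Icc_subset_Icc le_rfl hR.2
  constructor
  · intro R hR
    rcases eq_or_ne R 0 with rfl | hR0
    · simp [Linv, Lop]; ring
    · have hRpos : 0 < R := lt_of_le_of_ne hR.1 (Ne.symm hR0)
      -- the inner integral in Lop equals F on [0,R]
      have hint : (∫ τ in (0:ℝ)..R, τ ^ 4 * Lop ζ τ) = R ^ 2 * F R := by
        rw [← hId1 R]
        apply intervalIntegral.integral_congr
        intro τ hτ
        have hτ01 : τ ∈ Icc (0:ℝ) 1 := hsub R hR hτ
        rcases eq_or_ne τ 0 with rfl | hτ0
        · simp [Lop, hF0]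
        · have hFτ : (∫ s in (0:ℝ)..τ, s ^ 2 * ζ s) = F τ := by
            apply intervalIntegral.integral_congr
            intro s hs
            have : s ∈ Icc (0:ℝ) 1 := hsub τ hτ01 hs
            simp only [hψeq s this]
          simp only [Lop, if_neg hτ0]
          rw [hFτ, hψeq τ hτ01]
          field_simp
      have hFR : (∫ τ in (0:ℝ)..R, τ ^ 2 * ζ τ) = F R := by
        apply intervalIntegral.integral_congr
        intro s hs
        simp only [hψeq s (hsub R hR hs)]
      rw [show Linv (Lop ζ) R
            = Lop ζ R - (2 / R ^ 5) * ∫ τ in (0:ℝ)..R, τ ^ 4 * Lop ζ τ from if_neg hR0]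
      rw [show Lop ζ R
            = ζ R + (2 / R ^ 3) * ∫ τ in (0:ℝ)..R, τ ^ 2 * ζ τ from if_neg hR0]
      rw [hint, hFR]
      field_simp
      ring
  · intro R hR
    rcases eq_or_ne R 0 with rfl | hR0
    · simp [Linv, Lop]; ring
    · have hRpos : 0 < R := lt_of_le_of_ne hR.1 (Ne.symm hR0)
      have hint : (∫ τ in (0:ℝ)..R, τ ^ 2 * Linv ζ τ) = G R / R ^ 2 := by
        rw [← hId2 R]
        apply intervalIntegral.integral_congr
        intro τ hτ
        have hτ01 : τ ∈ Icc (0:ℝ) 1 := hsub R hR hτ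
        rcases eq_or_ne τ 0 with rfl | hτ0
        · simp [Linv, hg₂0]
        · have hGτ : (∫ s in (0:ℝ)..τ, s ^ 4 * ζ s) = G τ := by
            apply intervalIntegral.integral_congr
            intro s hs
            simp only [hψeq s (hsub τ hτ01 hs)]
          simp only [Linv, if_neg hτ0, hg₂]
          rw [hGτ, hψeq τ hτ01]
          field_simp
      have hGR : (∫ τ in (0:ℝ)..R, τ ^ 4 * ζ τ) = G R := by
        apply intervalIntegral.integral_congr
        intro s hs
        simp only [hψeq s (hsub R hR hs)]
      rw [show Lop (Linv ζ) R
            = Linv ζ R + (2 / R ^ 3) * ∫ τ in (0:ℝ)..R, τ ^ 2 * Linv ζ τ from if_neg hR0]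
      rw [show Linv ζ R
            = ζ R - (2 / R ^ 5) * ∫ τ in (0:ℝ)..R, τ ^ 4 * ζ τ from if_neg hR0]
      rw [hint, hGR]
      field_simp
      ring
end

section
/- With the normalized separable ansatz, y_ζ(R) = φ_ζ'(R)/λ_ζ(R) satisfies |y_ζ(R) − y_ζ̃(R)| ≤ R²‖ζ − ζ̃‖_∞ whenever ‖ζ‖_∞, ‖ζ̃‖_∞ ≤ δ ≤ 1/2; in particular, taking ζ̃ = 0, |y_ζ(R) − 1| ≤ R²δ. -/
open Set

/-!
Since `R φ'(R) − φ(R) = ∫₀^R τ²ζ(τ) dτ =: L_ζ(R)`, for `R > 0` one has `y_ζ(R) = 1 + L_ζ(R)/φ_ζ(R)`.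
Both `φ_ζ(R) − R` and `L_ζ(R)` are linear in `ζ`, with `|φ_ζ(R) − R| ≤ ‖ζ‖R/3` and
`|L_ζ(R)| ≤ ‖ζ‖R³/3`. Hence `φ_ζ(R) ≥ 5R/6`, and writing
`L/φ − L̃/φ̃ = (L − L̃)/φ + L̃(φ̃ − φ)/(φφ̃)` bounds the difference by
`(2/5 + 4δ/25) R² ‖ζ − ζ̃‖ ≤ R² ‖ζ − ζ̃‖`. At `R = 0`, `φ'(0) = λ(0) = a(ζ) ≠ 0`, so `y_ζ(0) = 1`.
-/

/-- The normalization constant `a(ζ) = φ'(0) = 1 − ∫₀¹ (1−τ)τζ(τ)dτ` (so `φ(1) = 1`). -/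
noncomputable def acoef (ζ : ℝ → ℝ) : ℝ := 1 - ∫ τ in (0:ℝ)..1, (1 - τ) * τ * ζ τ

/-- `φ_ζ(R) = a(ζ)R + ∫₀^R (R−τ)τζ(τ)dτ`. -/
noncomputable def phi (ζ : ℝ → ℝ) (R : ℝ) : ℝ :=
  acoef ζ * R + ∫ τ in (0:ℝ)..R, (R - τ) * τ * ζ τ

/-- `φ_ζ'(R) = a(ζ) + ∫₀^R τζ(τ)dτ`. -/
noncomputable def dphi (ζ : ℝ → ℝ) (R : ℝ) : ℝ :=
  acoef ζ + ∫ τ in (0:ℝ)..R, τ * ζ τ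

/-- `λ_ζ(R) = φ_ζ(R)/R` for `R > 0`, with `λ_ζ(0) = a(ζ)`. -/
noncomputable def lam (ζ : ℝ → ℝ) (R : ℝ) : ℝ :=
  if R = 0 then acoef ζ else phi ζ R / R

/-- `y_ζ(R) = φ_ζ'(R)/λ_ζ(R)`. -/
noncomputable def yfun (ζ : ℝ → ℝ) (R : ℝ) : ℝ := dphi ζ R / lam ζ R

open MeasureTheory intervalIntegral

lemma abs_integral_mul_le {w f : ℝ → ℝ} {a b M : ℝ} (hab : a ≤ b)
    (hw : IntervalIntegrable w volume a b) (hw0 : ∀ t ∈ Ioc a b, 0 ≤ w t) (hf : ∀ t ∈ Ioc a b, |f t| ≤ M) :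
    |∫ t in a..b, w t * f t| ≤ M * ∫ t in a..b, w t := by
  rw [← intervalIntegral.integral_const_mul, ← Real.norm_eq_abs]
  refine norm_integral_le_of_norm_le hab (Filter.Eventually.of_forall fun t ht => ?_)
    (hw.const_mul M)
  rw [Real.norm_eq_abs, abs_mul, abs_of_nonneg (hw0 t ht), mul_comm M]
  exact mul_le_mul_of_nonneg_left (hf t ht) (hw0 t ht)

lemma integral_sub_mul_self (R : ℝ) : ∫ t in (0:ℝ)..R, (R - t) * t = R ^ 3 / 6 := by
  have hint : ∀ t : ℝ, (R - t) * t = R * t - t ^ 2 := fun t => by ring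
  simp_rw [hint]
  rw [intervalIntegral.integral_sub (f := fun t => R * t) (g := fun t => t ^ 2)
    ((continuous_const.mul continuous_id).intervalIntegrable _ _)
    ((continuous_pow 2).intervalIntegrable _ _), intervalIntegral.integral_const_mul, integral_id,
    integral_pow]
  ring

lemma abs_div_sub_div_le {L L' p p' R C δ : ℝ} (hR : 0 < R) (hδ : δ ≤ 1 / 2)
    (hL : |L - L'| ≤ C * R ^ 3 / 3) (hL' : |L'| ≤ δ * R ^ 3 / 3) (hp : |p - p'| ≤ C * R / 3)
    (hp0 : 5 * R / 6 ≤ p) (hp0' : 5 * R / 6 ≤ p') :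
    |L / p - L' / p'| ≤ R ^ 2 * C := by
  have hpos : 0 < p := by linarith
  have hpos' : 0 < p' := by linarith
  have hC : 0 ≤ C := by nlinarith [abs_nonneg (p - p')]
  have hδR : 0 ≤ δ * R ^ 3 / 3 := (abs_nonneg _).trans hL'
  calc |L / p - L' / p'| = |(L - L') / p + L' * (p' - p) / (p * p')| := by
        congr 1; field_simp; ring
    _ ≤ |L - L'| / p + |L'| * |p - p'| / (p * p') := by
        refine (abs_add_le _ _).trans_eq ?_
        rw [abs_div, abs_div, abs_mul, abs_sub_comm p', abs_of_pos hpos,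
          abs_of_pos (mul_pos hpos hpos')]
    _ ≤ (C * R ^ 3 / 3) / (5 * R / 6)
          + (δ * R ^ 3 / 3) * (C * R / 3) / (5 * R / 6 * (5 * R / 6)) := by
        gcongr
    _ = (2 / 5 + 4 / 25 * δ) * (R ^ 2 * C) := by field_simp; ring
    _ ≤ 1 * (R ^ 2 * C) := by gcongr; linarith
    _ = R ^ 2 * C := one_mul _

section Ansatz

variable {ζ ζt w : ℝ → ℝ} {M R δ C : ℝ}

lemma intervalIntegrable_mul_of_continuousOn (hw : Continuous w)
    (hζ : ContinuousOn ζ (Icc 0 1)) (hR : R ∈ Icc (0:ℝ) 1) :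
    IntervalIntegrable (fun t => w t * ζ t) volume 0 R :=
  (hw.continuousOn.mul (hζ.mono (Icc_subset_Icc le_rfl hR.2))).intervalIntegrable_of_Icc hR.1

lemma integral_mul_sub_of_continuousOn (hw : Continuous w) (hζ : ContinuousOn ζ (Icc 0 1))
    (hζt : ContinuousOn ζt (Icc 0 1)) (hR : R ∈ Icc (0:ℝ) 1) :
    ∫ t in (0:ℝ)..R, w t * (ζ - ζt) t =
      (∫ t in (0:ℝ)..R, w t * ζ t) - ∫ t in (0:ℝ)..R, w t * ζt t := by
  simp only [Pi.sub_apply, mul_sub]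
  exact integral_sub (intervalIntegrable_mul_of_continuousOn hw hζ hR)
    (intervalIntegrable_mul_of_continuousOn hw hζt hR)

lemma abs_integral_mul_le_of_bound (hw : Continuous w) (hR : R ∈ Icc (0:ℝ) 1)
    (hw0 : ∀ t ∈ Ioc 0 R, 0 ≤ w t) (hM : ∀ t ∈ Icc (0:ℝ) 1, |ζ t| ≤ M) :
    |∫ t in (0:ℝ)..R, w t * ζ t| ≤ M * ∫ t in (0:ℝ)..R, w t :=
  abs_integral_mul_le hR.1 (hw.intervalIntegrable _ _) hw0
    fun t ht => hM t ⟨ht.1.le, ht.2.trans hR.2⟩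

lemma acoef_sub (hζ : ContinuousOn ζ (Icc 0 1)) (hζt : ContinuousOn ζt (Icc 0 1)) :
    acoef ζ - acoef ζt = acoef (ζ - ζt) - 1 := by
  unfold acoef
  rw [integral_mul_sub_of_continuousOn (w := fun t => (1 - t) * t)
    (by fun_prop) hζ hζt ⟨zero_le_one, le_rfl⟩]
  ring

lemma phi_sub (hζ : ContinuousOn ζ (Icc 0 1)) (hζt : ContinuousOn ζt (Icc 0 1))
    (hR : R ∈ Icc (0:ℝ) 1) : phi ζ R - phi ζt R = phi (ζ - ζt) R - R := by
  unfold phi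
  rw [integral_mul_sub_of_continuousOn (w := fun t => (R - t) * t) (by fun_prop) hζ hζt hR]
  linear_combination R * acoef_sub hζ hζt

lemma mul_dphi_sub_phi (hζ : ContinuousOn ζ (Icc 0 1)) (hR : R ∈ Icc (0:ℝ) 1) :
    R * dphi ζ R - phi ζ R = ∫ t in (0:ℝ)..R, t ^ 2 * ζ t := by
  have hmul : R * ∫ t in (0:ℝ)..R, t * ζ t = ∫ t in (0:ℝ)..R, R * t * ζ t := by
    rw [← intervalIntegral.integral_const_mul]
    simp only [mul_assoc]
  have hsub := integral_sub (intervalIntegrable_mul_of_continuousOn (w := fun t => R * t)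
    (by fun_prop) hζ hR) (intervalIntegrable_mul_of_continuousOn (w := fun t => (R - t) * t)
    (by fun_prop) hζ hR)
  unfold dphi phi
  rw [mul_add, hmul]
  have hint : ∀ t, R * t * ζ t - (R - t) * t * ζ t = t ^ 2 * ζ t := fun t => by ring
  simp only [hint] at hsub
  linarith

lemma abs_acoef_sub_one_le (hM : ∀ t ∈ Icc (0:ℝ) 1, |ζ t| ≤ M) : |acoef ζ - 1| ≤ M / 6 := by
  have h := abs_integral_mul_le_of_bound (w := fun t => (1 - t) * t) (by fun_prop)
    ⟨zero_le_one, le_rfl⟩ (fun t ht => mul_nonneg (by linarith [ht.2]) ht.1.le) hM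
  rw [integral_sub_mul_self] at h
  rw [acoef, sub_sub_cancel_left, abs_neg]
  linarith

lemma abs_phi_sub_self_le (hM : ∀ t ∈ Icc (0:ℝ) 1, |ζ t| ≤ M) (hR : R ∈ Icc (0:ℝ) 1) :
    |phi ζ R - R| ≤ M * R / 3 := by
  have ha := abs_acoef_sub_one_le hM
  have hint := abs_integral_mul_le_of_bound (w := fun t => (R - t) * t) (by fun_prop) hR
    (fun t ht => mul_nonneg (by linarith [ht.2]) ht.1.le) hM
  rw [integral_sub_mul_self] at hint
  have hM0 : 0 ≤ M := (abs_nonneg _).trans (hM 0 ⟨le_rfl, zero_le_one⟩)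
  have hR3 : R ^ 3 ≤ R := pow_le_of_le_one hR.1 hR.2 three_ne_zero
  calc |phi ζ R - R| = |(acoef ζ - 1) * R + ∫ t in (0:ℝ)..R, (R - t) * t * ζ t| := by
        rw [phi]; ring_nf
    _ ≤ |acoef ζ - 1| * R + M * (R ^ 3 / 6) := by
        rw [← abs_of_nonneg hR.1, ← abs_mul, abs_of_nonneg hR.1]
        exact (abs_add_le _ _).trans (by gcongr)
    _ ≤ M / 6 * R + M * (R / 6) := by gcongr; exact hR.1
    _ = M * R / 3 := by ring

lemma abs_integral_sq_mul_le (hM : ∀ t ∈ Icc (0:ℝ) 1, |ζ t| ≤ M) (hR : R ∈ Icc (0:ℝ) 1) :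
    |∫ t in (0:ℝ)..R, t ^ 2 * ζ t| ≤ M * R ^ 3 / 3 := by
  have h := abs_integral_mul_le_of_bound (w := fun t => t ^ 2) (by fun_prop) hR
    (fun t _ => sq_nonneg t) hM
  rw [integral_pow] at h
  norm_num at h
  linarith

lemma yfun_apply_zero (h : acoef ζ ≠ 0) : yfun ζ 0 = 1 := by
  rw [yfun, lam, if_pos rfl, dphi, integral_same, add_zero, div_self h]

lemma yfun_eq_one_add_div (hζ : ContinuousOn ζ (Icc 0 1)) (hR : R ∈ Icc (0:ℝ) 1) (hR0 : R ≠ 0)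
    (hphi : phi ζ R ≠ 0) : yfun ζ R = 1 + (∫ t in (0:ℝ)..R, t ^ 2 * ζ t) / phi ζ R := by
  rw [← mul_dphi_sub_phi hζ hR, yfun, lam, if_neg hR0]
  field_simp
  ring

lemma yfun_zero : yfun 0 R = 1 := by
  have ha : acoef 0 = 1 := by simp [acoef]
  rcases eq_or_ne R 0 with rfl | hR0
  · exact yfun_apply_zero (by simp [ha])
  · simp [yfun, lam, dphi, phi, ha, hR0]

lemma abs_yfun_sub_yfun_le (hδ : δ ≤ 1 / 2) (hζ : ContinuousOn ζ (Icc 0 1))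
    (hζt : ContinuousOn ζt (Icc 0 1)) (hζδ : ∀ t ∈ Icc (0:ℝ) 1, |ζ t| ≤ δ)
    (hζtδ : ∀ t ∈ Icc (0:ℝ) 1, |ζt t| ≤ δ) (hC : ∀ t ∈ Icc (0:ℝ) 1, |ζ t - ζt t| ≤ C)
    (hR : R ∈ Icc (0:ℝ) 1) : |yfun ζ R - yfun ζt R| ≤ R ^ 2 * C := by
  rcases hR.1.eq_or_lt with rfl | hR0
  · have hacoef_ne {ξ : ℝ → ℝ} (hξ : ∀ t ∈ Icc (0:ℝ) 1, |ξ t| ≤ δ) : acoef ξ ≠ 0 := by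
      have := abs_le.mp (abs_acoef_sub_one_le hξ)
      linarith
    rw [yfun_apply_zero (hacoef_ne hζδ), yfun_apply_zero (hacoef_ne hζtδ)]
    simp
  have hphi_ge {ξ : ℝ → ℝ} (hξ : ∀ t ∈ Icc (0:ℝ) 1, |ξ t| ≤ δ) : 5 * R / 6 ≤ phi ξ R := by
    have := (abs_le.mp (abs_phi_sub_self_le hξ hR)).1
    nlinarith
  have hphi_ne {ξ : ℝ → ℝ} (hξ : ∀ t ∈ Icc (0:ℝ) 1, |ξ t| ≤ δ) : phi ξ R ≠ 0 :=
    ((by linarith : (0:ℝ) < 5 * R / 6).trans_le (hphi_ge hξ)).ne'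
  rw [yfun_eq_one_add_div hζ hR hR0.ne' (hphi_ne hζδ),
    yfun_eq_one_add_div hζt hR hR0.ne' (hphi_ne hζtδ), add_sub_add_left_eq_sub]
  refine abs_div_sub_div_le hR0 hδ ?_ (abs_integral_sq_mul_le hζtδ hR) ?_
    (hphi_ge hζδ) (hphi_ge hζtδ)
  · rw [← integral_mul_sub_of_continuousOn (by fun_prop) hζ hζt hR]
    exact abs_integral_sq_mul_le hC hR
  · rw [phi_sub hζ hζt hR]
    exact abs_phi_sub_self_le hC hR

end Ansatz

/-- For `‖ζ‖_∞, ‖ζ̃‖_∞ ≤ δ ≤ 1/2`, one has `|y_ζ(R) − y_ζ̃(R)| ≤ R²‖ζ−ζ̃‖_∞`;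
in particular (taking `ζ̃ = 0`), `|y_ζ(R) − 1| ≤ R²δ`. -/
theorem stmt_13 (δ : ℝ) (hδ : δ ≤ 1/2) (ζ ζt : ℝ → ℝ)
    (hζ : ContinuousOn ζ (Icc 0 1)) (hζt : ContinuousOn ζt (Icc 0 1))
    (hζδ : ∀ τ ∈ Icc (0:ℝ) 1, |ζ τ| ≤ δ) (hζtδ : ∀ τ ∈ Icc (0:ℝ) 1, |ζt τ| ≤ δ)
    (C : ℝ) (hC : ∀ τ ∈ Icc (0:ℝ) 1, |ζ τ - ζt τ| ≤ C) :
    (∀ R ∈ Icc (0:ℝ) 1, |yfun ζ R - yfun ζt R| ≤ R ^ 2 * C) ∧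
    (∀ R ∈ Icc (0:ℝ) 1, |yfun ζ R - 1| ≤ R ^ 2 * δ) := by
  have hδ0 : 0 ≤ δ := (abs_nonneg _).trans (hζδ 0 ⟨le_rfl, zero_le_one⟩)
  refine ⟨fun R hR => abs_yfun_sub_yfun_le hδ hζ hζt hζδ hζtδ hC hR, fun R hR => ?_⟩
  have h := abs_yfun_sub_yfun_le (ζt := 0) hδ hζ continuousOn_const hζδ
    (fun _ _ => by simpa using hδ0) (by simpa using hζδ) hR
  rwa [yfun_zero] at h
end
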